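/- (Laplace principle) For a continuous function F : ℝ^d → ℝ that is bounded below and an absolutely continuous probability density g with compact support, lim_{T→0⁺} −T log(∫ g(x) e^{−F(x)/T} dx) = inf_{x ∈ supp(g)} F(x). -/

import Mathlib

/-!
Write `I(T) = ∫ g e^{-F/T}` and `m = inf F` over the support of `g`. Since `F ≥ m` where `g ≠ 0`
and `∫ g = 1`, `I(T) ≤ e^{-m/T}`, i.e. `m ≤ -T log I(T)`. Conversely, for `a > m` the open set
`{F < a}` meets the support of the continuous density `g`, so it carries a positive mass `c` of `g`;
then `I(T) ≥ c e^{-a/T}`, i.e. `-T log I(T) ≤ a - T log c`, which tends to `a` as `T → 0⁺`.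
-/

open MeasureTheory Filter Set Function Real Topology

namespace Real

lemma le_neg_mul_log_iff {T I : ℝ} (hT : 0 < T) (hI : 0 < I) (m : ℝ) :
    m ≤ -T * log I ↔ I ≤ exp (-m / T) := by
  rw [← log_le_log_iff hI (exp_pos _), log_exp, le_div_iff₀ hT]
  constructor <;> intro h <;> linarith

lemma neg_mul_log_le_sub_iff {T I c : ℝ} (hT : 0 < T) (hI : 0 < I) (hc : 0 < c) (a : ℝ) :
    -T * log I ≤ a - T * log c ↔ c * exp (-a / T) ≤ I := by
  rw [← log_le_log_iff (by positivity) hI, log_mul hc.ne' (exp_pos _).ne', log_exp,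
    ← le_sub_iff_add_le', div_le_iff₀ hT]
  constructor <;> intro h <;> linarith

end Real

lemma mul_exp_neg_div_le_of_le {X : Type*} {F g : X → ℝ} {m T : ℝ} (hg : ∀ x, 0 ≤ g x)
    (hm : ∀ x ∈ support g, m ≤ F x) (hT : 0 ≤ T) (x : X) :
    g x * exp (-F x / T) ≤ g x * exp (-m / T) := by
  rcases eq_or_ne (g x) 0 with h | h
  · simp [h]
  · gcongr
    · exact hg x
    · exact hm x h

section LaplacePrinciple

variable {X : Type*} [TopologicalSpace X] [MeasurableSpace X] {μ : Measure X} {F g : X → ℝ}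
  {m T : ℝ}

lemma setIntegral_pos_of_isOpen [μ.IsOpenPosMeasure] {U : Set X} (hU : IsOpen U)
    (hg : Continuous g) (hg_nonneg : ∀ x, 0 ≤ g x) (hgi : Integrable g μ)
    (hUg : (U ∩ support g).Nonempty) : 0 < ∫ x in U, g x ∂μ := by
  rw [setIntegral_pos_iff_support_of_nonneg_ae (Eventually.of_forall hg_nonneg) hgi.integrableOn,
    inter_comm]
  exact (hU.inter hg.isOpen_support).measure_pos μ hUg

variable [OpensMeasurableSpace X]

lemma integrable_mul_exp_neg_div (hF : Continuous F) (hg : Continuous g) (hg_nonneg : ∀ x, 0 ≤ g x)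
    (hgi : Integrable g μ) (hm : ∀ x ∈ support g, m ≤ F x) (hT : 0 ≤ T) :
    Integrable (fun x => g x * exp (-F x / T)) μ := by
  refine (hgi.mul_const (exp (-m / T))).mono' (by fun_prop) (Eventually.of_forall fun x => ?_)
  rw [norm_of_nonneg (mul_nonneg (hg_nonneg x) (exp_pos _).le)]
  exact mul_exp_neg_div_le_of_le hg_nonneg hm hT x

lemma integral_mul_exp_neg_div_le (hF : Continuous F) (hg : Continuous g)
    (hg_nonneg : ∀ x, 0 ≤ g x) (hgi : Integrable g μ) (hg_one : ∫ x, g x ∂μ = 1)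
    (hm : ∀ x ∈ support g, m ≤ F x) (hT : 0 ≤ T) :
    ∫ x, g x * exp (-F x / T) ∂μ ≤ exp (-m / T) :=
  calc ∫ x, g x * exp (-F x / T) ∂μ ≤ ∫ x, g x * exp (-m / T) ∂μ :=
        integral_mono (integrable_mul_exp_neg_div hF hg hg_nonneg hgi hm hT) (hgi.mul_const _)
          (mul_exp_neg_div_le_of_le hg_nonneg hm hT)
    _ = exp (-m / T) := by rw [integral_mul_const, hg_one, one_mul]

lemma setIntegral_mul_exp_le_integral_mul_exp (hF : Continuous F) (hg : Continuous g)
    (hg_nonneg : ∀ x, 0 ≤ g x) (hgi : Integrable g μ) (hm : ∀ x ∈ support g, m ≤ F x)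
    (hT : 0 ≤ T) (a : ℝ) :
    (∫ x in {x | F x < a}, g x ∂μ) * exp (-a / T) ≤ ∫ x, g x * exp (-F x / T) ∂μ := by
  have hI := integrable_mul_exp_neg_div hF hg hg_nonneg hgi hm hT
  calc (∫ x in {x | F x < a}, g x ∂μ) * exp (-a / T)
      = ∫ x in {x | F x < a}, g x * exp (-a / T) ∂μ := (integral_mul_const _ _).symm
    _ ≤ ∫ x in {x | F x < a}, g x * exp (-F x / T) ∂μ := by
        refine setIntegral_mono_on (hgi.integrableOn.mul_const _) hI.integrableOn
          (isOpen_lt hF continuous_const).measurableSet fun x hx => ?_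
        have hx : F x < a := hx
        gcongr
        exact hg_nonneg x
    _ ≤ ∫ x, g x * exp (-F x / T) ∂μ :=
        setIntegral_le_integral hI
          (Eventually.of_forall fun x => mul_nonneg (hg_nonneg x) (exp_pos _).le)

theorem tendsto_neg_mul_log_integral_mul_exp [μ.IsOpenPosMeasure] (hF : Continuous F)
    (hg : Continuous g) (hg_nonneg : ∀ x, 0 ≤ g x) (hgi : Integrable g μ)
    (hg_one : ∫ x, g x ∂μ = 1) (hm : IsGLB (F '' support g) m) :
    Tendsto (fun T => -T * log (∫ x, g x * exp (-F x / T) ∂μ)) (𝓝[>] 0) (𝓝 m) := by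
  have hm_le : ∀ x ∈ support g, m ≤ F x := fun x hx => hm.1 (mem_image_of_mem F hx)
  have hmass : ∀ a, m < a → 0 < ∫ x in {x | F x < a}, g x ∂μ := fun a ha => by
    obtain ⟨_, ⟨x, hx, rfl⟩, -, hxa⟩ := hm.exists_between ha
    exact setIntegral_pos_of_isOpen (isOpen_lt hF continuous_const) hg hg_nonneg hgi ⟨x, hxa, hx⟩
  have hlow : ∀ a T, 0 < T → (∫ x in {x | F x < a}, g x ∂μ) * exp (-a / T) ≤
      ∫ x, g x * exp (-F x / T) ∂μ := fun a T hT =>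
    setIntegral_mul_exp_le_integral_mul_exp hF hg hg_nonneg hgi hm_le hT.le a
  have hI_pos : ∀ T, 0 < T → 0 < ∫ x, g x * exp (-F x / T) ∂μ := fun T hT =>
    (mul_pos (hmass (m + 1) (lt_add_one m)) (exp_pos _)).trans_le (hlow (m + 1) T hT)
  rw [tendsto_order]
  refine ⟨fun b hb => ?_, fun b hb => ?_⟩
  · filter_upwards [self_mem_nhdsWithin] with T hT
    exact hb.trans_le <| (le_neg_mul_log_iff hT (hI_pos T hT) m).2 <|
      integral_mul_exp_neg_div_le hF hg hg_nonneg hgi hg_one hm_le hT.le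
  · obtain ⟨a, hma, hab⟩ := exists_between hb
    set c := ∫ x in {x | F x < a}, g x ∂μ
    have hlim : Tendsto (fun T => a - T * log c) (𝓝[>] 0) (𝓝 a) := by
      simpa using (((tendsto_id (x := 𝓝 (0 : ℝ))).mul_const (log c)).const_sub a).mono_left
        nhdsWithin_le_nhds
    filter_upwards [self_mem_nhdsWithin, hlim.eventually (gt_mem_nhds hab)] with T hT hTb
    exact ((neg_mul_log_le_sub_iff hT (hI_pos T hT) (hmass a hma) a).2 (hlow a T hT)).trans_lt hTb

end LaplacePrinciple

theorem laplace_principle_general (d : ℕ) (F : (Fin d → ℝ) → ℝ)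
    (hF_cont : Continuous F)
    (g : (Fin d → ℝ) → ℝ) (hg_cont : Continuous g) (hg_nonneg : ∀ x, 0 ≤ g x)
    (hg_supp : HasCompactSupport g) (hg_one : ∫ x, g x = 1) :
    Tendsto (fun T : ℝ => -T * Real.log (∫ x, g x * Real.exp (-F x / T)))
      (nhdsWithin 0 (Set.Ioi 0)) (nhds (sInf (F '' tsupport g))) := by
  have hsupp : (tsupport g).Nonempty := by
    obtain ⟨x, hx⟩ := exists_ne_zero_of_integral_ne_zero (hg_one ▸ one_ne_zero)
    exact ⟨x, subset_tsupport g hx⟩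
  have hglb : IsGLB (F '' support g) (sInf (F '' tsupport g)) :=
    (isGLB_iff_of_subset_of_subset_closure (image_mono (subset_tsupport g))
      (image_closure_subset_closure_image hF_cont)).2
      ((hg_supp.image hF_cont).isGLB_sInf (hsupp.image F))
  exact tendsto_neg_mul_log_integral_mul_exp hF_cont hg_cont hg_nonneg
    (hg_cont.integrable_of_hasCompactSupport hg_supp) hg_one hglb

theorem laplace_principle (d : ℕ) (F : (Fin d → ℝ) → ℝ)
    (hF_cont : Continuous F) (hF_bdd : BddBelow (Set.range F))
    (g : (Fin d → ℝ) → ℝ) (hg_cont : Continuous g) (hg_nonneg : ∀ x, 0 ≤ g x)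
    (hg_supp : HasCompactSupport g) (hg_one : ∫ x, g x = 1) :
    Tendsto (fun T : ℝ => -T * Real.log (∫ x, g x * Real.exp (-F x / T)))
      (nhdsWithin 0 (Set.Ioi 0)) (nhds (sInf (F '' tsupport g))) :=
  laplace_principle_general d F hF_cont g hg_cont hg_nonneg hg_supp hg_one
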